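/- For every n ≥ 1, the number of 110-avoiding ascent sequences of length 3n is at least n!. The witnessing family consists of sequences whose first n terms are 0,1,…,n−1, whose second n terms are again 0,1,…,n−1, and whose last n terms are an arbitrary permutation of n, n+1, …, 2n−1; each such sequence is a 110-avoiding ascent sequence. -/

import Mathlib

open Filter Topology

/-- Number of ascents in a sequence (list) of naturals. -/
def asc (s : List ℕ) : ℕ :=
  ((s.zip s.tail).filter (fun p => p.1 < p.2)).length

/-- `s` is an ascent sequence: first entry `0`, and each later entry is at most
one more than the number of ascents of the preceding prefix. -/
def IsAscentSeq (s : List ℕ) : Prop :=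
  (0 < s.length → s.getD 0 0 = 0) ∧
  ∀ i, 0 < i → i < s.length → s.getD i 0 ≤ asc (s.take i) + 1

/-- `s` is a weak ascent sequence: every entry is at most the number of ascents. -/
def IsWeakAscentSeq (s : List ℕ) : Prop :=
  ∀ x ∈ s, x ≤ asc s

/-- `s` contains the pattern `p`: some subsequence of `s` is order-isomorphic
(including equalities) to `p`. -/
def ContainsPattern (s p : List ℕ) : Prop :=
  ∃ idx : Fin p.length → ℕ, StrictMono idx ∧ (∀ a, idx a < s.length) ∧
    ∀ a b : Fin p.length, p.get a < p.get b ↔ s.getD (idx a) 0 < s.getD (idx b) 0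

def AvoidsPattern (s p : List ℕ) : Prop := ¬ ContainsPattern s p

/-- A pattern of length `j` is a permutation of `0,…,j-1`. -/
def IsPattern (p : List ℕ) : Prop := List.Perm p (List.range p.length)

/-- Sum-indecomposable: no proper prefix whose entries are all smaller than
all entries of the complementary suffix. -/
def SumIndecomposable (p : List ℕ) : Prop :=
  ¬ ∃ i, 0 < i ∧ i < p.length ∧ ∀ x ∈ p.take i, ∀ y ∈ p.drop i, x < y

/-- Number of `p`-avoiding ascent sequences of length `k`. -/
noncomputable def ascentAvoidCount (p : List ℕ) (k : ℕ) : ℕ :=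
  {s : List ℕ | s.length = k ∧ IsAscentSeq s ∧ AvoidsPattern s p}.ncard

/-- Number of `p`-avoiding weak ascent sequences of length `k`. -/
noncomputable def weakAvoidCount (p : List ℕ) (k : ℕ) : ℕ :=
  {s : List ℕ | s.length = k ∧ IsWeakAscentSeq s ∧ AvoidsPattern s p}.ncard

def listMax (s : List ℕ) : ℕ := s.foldr max 0
def listMin (s : List ℕ) : ℕ := s.foldr min (listMax s)

/-- Reverse-complement map: `m j = max + min - n (k+1-j)`. -/
def revComp (s : List ℕ) : List ℕ :=
  s.reverse.map (fun x => listMax s + listMin s - x)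

/-- Occurrence of pattern 000: three equal entries. -/
def Contains000 (s : List ℕ) : Prop :=
  ∃ a b c, a < b ∧ b < c ∧ c < s.length ∧
    s.getD a 0 = s.getD b 0 ∧ s.getD b 0 = s.getD c 0

/-- Occurrence of pattern 100: `n i₁ > n i₂ = n i₃`. -/
def Contains100 (s : List ℕ) : Prop :=
  ∃ a b c, a < b ∧ b < c ∧ c < s.length ∧
    s.getD b 0 < s.getD a 0 ∧ s.getD b 0 = s.getD c 0

/-- Occurrence of pattern 110: `n i₁ = n i₂ > n i₃`. -/
def Contains110 (s : List ℕ) : Prop :=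
  ∃ a b c, a < b ∧ b < c ∧ c < s.length ∧
    s.getD a 0 = s.getD b 0 ∧ s.getD c 0 < s.getD b 0

/-- Occurrence of pattern 120: `n i₂ > n i₁ > n i₃`. -/
def Contains120 (s : List ℕ) : Prop :=
  ∃ a b c, a < b ∧ b < c ∧ c < s.length ∧
    s.getD a 0 < s.getD b 0 ∧ s.getD c 0 < s.getD a 0

/-- Occurrence of pattern 201: `n i₁ > n i₃ > n i₂`. -/
def Contains201 (s : List ℕ) : Prop :=
  ∃ a b c, a < b ∧ b < c ∧ c < s.length ∧
    s.getD c 0 < s.getD a 0 ∧ s.getD b 0 < s.getD c 0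

/-- Occurrence of pattern 012: `n i₁ < n i₂ < n i₃`. -/
def Contains012 (s : List ℕ) : Prop :=
  ∃ a b c, a < b ∧ b < c ∧ c < s.length ∧
    s.getD a 0 < s.getD b 0 ∧ s.getD b 0 < s.getD c 0

/-- Occurrence of pattern 011: `n i₁ < n i₂ = n i₃`. -/
def Contains011 (s : List ℕ) : Prop :=
  ∃ a b c, a < b ∧ b < c ∧ c < s.length ∧
    s.getD a 0 < s.getD b 0 ∧ s.getD b 0 = s.getD c 0

/-- Occurrence of pattern 021: `n i₁ < n i₃ < n i₂`. -/
def Contains021 (s : List ℕ) : Prop :=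
  ∃ a b c, a < b ∧ b < c ∧ c < s.length ∧
    s.getD a 0 < s.getD c 0 ∧ s.getD c 0 < s.getD b 0

/-- Occurrence of pattern 102: `n i₂ < n i₁ < n i₃`. -/
def Contains102 (s : List ℕ) : Prop :=
  ∃ a b c, a < b ∧ b < c ∧ c < s.length ∧
    s.getD b 0 < s.getD a 0 ∧ s.getD a 0 < s.getD c 0

/-- The construction `C = 0101⋯01 W̃₁⋯W̃ₖ` from weak ascent sequences. -/
def buildC (k : ℕ) (W : Fin k → List ℕ) : List ℕ :=
  (List.replicate k ([0,1] : List ℕ)).flatten ++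
    (List.ofFn (fun h : Fin k =>
      (W h).map (fun x =>
        x + 1 + ∑ j ∈ Finset.univ.filter (fun j => j < h), listMax (W j)))).flatten

/-!
The first `2n` entries `0,…,n-1,0,…,n-1` already have `2n - 2` ascents, so any entry up to
`2n - 1` may follow; and in such a sequence the only repeated values are the pairs `i, i` in the
first two runs, after which everything is larger.  Distinct permutations of `n,…,2n-1` give
distinct sequences, whence `n!` of them; the set counted is finite because the entries of an
ascent sequence are bounded by its length.
-/

lemma asc_cons_cons (a b : ℕ) (t : List ℕ) :
    asc (a :: b :: t) = (if a < b then 1 else 0) + asc (b :: t) := by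
  unfold asc
  simp only [List.tail_cons, List.zip_cons_cons, List.filter_cons]
  by_cases h : a < b <;> simp [h, Nat.add_comm]

lemma asc_le_asc_cons (a : ℕ) (s : List ℕ) : asc s ≤ asc (a :: s) := by
  cases s with
  | nil => simp [asc]
  | cons b t => rw [asc_cons_cons]; omega

lemma asc_add_asc_le_asc_append : ∀ s t : List ℕ, asc s + asc t ≤ asc (s ++ t)
  | [], t => by simp [asc]
  | [a], t => by simpa [asc] using asc_le_asc_cons a t
  | a :: b :: s, t => by
    have ih := asc_add_asc_le_asc_append (b :: s) t
    rw [List.cons_append] at ih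
    rw [List.cons_append, List.cons_append, asc_cons_cons, asc_cons_cons]
    omega

lemma asc_le_length (s : List ℕ) : asc s ≤ s.length := by
  refine (List.length_filter_le _ _).trans ?_
  simp only [List.length_zip, List.length_tail]
  omega

lemma asc_of_isChain_lt : ∀ s : List ℕ, s.IsChain (· < ·) → asc s = s.length - 1
  | [], _ => rfl
  | [_], _ => rfl
  | a :: b :: t, h => by
    obtain ⟨hab, hbt⟩ := List.isChain_cons_cons.mp h
    rw [asc_cons_cons, asc_of_isChain_lt (b :: t) hbt, if_pos hab]
    simp only [List.length_cons]
    omega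

lemma asc_range (n : ℕ) : asc (List.range n) = n - 1 := by
  rw [asc_of_isChain_lt _ List.pairwise_lt_range.isChain, List.length_range]

lemma isAscentSeq_range (n : ℕ) : IsAscentSeq (List.range n) := by
  refine ⟨fun h => ?_, fun i hi hin => ?_⟩
  · rw [List.getD_eq_getElem _ _ h, List.getElem_range]
  · rw [List.getD_eq_getElem _ _ hin, List.getElem_range, List.take_range, asc_range]
    rw [List.length_range] at hin
    omega

lemma IsAscentSeq.le_length {s : List ℕ} (hs : IsAscentSeq s) : ∀ x ∈ s, x ≤ s.length := by
  intro x hx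
  obtain ⟨i, hi, rfl⟩ := List.mem_iff_getElem.mp hx
  rw [← List.getD_eq_getElem _ 0 hi]
  rcases Nat.eq_zero_or_pos i with rfl | hi0
  · rw [hs.1 hi]
    exact Nat.zero_le _
  · have := asc_le_length (s.take i)
    rw [List.length_take] at this
    have := hs.2 i hi0 hi
    omega

lemma IsAscentSeq.append {s t : List ℕ} (hs : IsAscentSeq s) (hs0 : s ≠ [])
    (ht : ∀ x ∈ t, x ≤ asc s + 1) : IsAscentSeq (s ++ t) := by
  have hlen : 0 < s.length := List.length_pos_iff.mpr hs0
  refine ⟨fun _ => ?_, fun i hi hit => ?_⟩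
  · rw [List.getD_append _ _ _ _ hlen, hs.1 hlen]
  · rcases lt_or_ge i s.length with his | his
    · rw [List.getD_append _ _ _ _ his, List.take_append_of_le_length his.le]
      exact hs.2 i hi his
    · have hmem : (s ++ t).getD i 0 ∈ t := by
        rw [List.length_append] at hit
        rw [List.getD_append_right _ _ _ _ his, List.getD_eq_getElem _ _ (by omega)]
        exact List.getElem_mem _
      have hasc : asc s ≤ asc ((s ++ t).take i) := by
        rw [List.take_append, List.take_of_length_le his]
        exact (Nat.le_add_right _ _).trans (asc_add_asc_le_asc_append _ _)
      exact (ht _ hmem).trans (Nat.add_le_add_right hasc 1)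

lemma finite_setOf_length_eq_forall_le (k m : ℕ) :
    {s : List ℕ | s.length = k ∧ ∀ x ∈ s, x ≤ m}.Finite := by
  refine ((List.finite_length_eq (Fin (m + 1)) k).image (List.map Fin.val)).subset ?_
  rintro s ⟨rfl, hs⟩
  refine ⟨s.attach.map fun x => ⟨x.1, Nat.lt_succ_of_le (hs x.1 x.2)⟩, by simp, ?_⟩
  simp

lemma not_contains110_append_of_nodup_of_pairwise_lt {s t : List ℕ} (hs : s.Nodup)
    (ht : t.Pairwise (· < ·)) : ¬Contains110 (s ++ t) := by
  rintro ⟨a, b, c, hab, hbc, hc, heq, hlt⟩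
  rw [List.length_append] at hc
  rcases lt_or_ge b s.length with hb | hb
  · rw [List.getD_append _ _ _ _ (hab.trans hb), List.getD_append _ _ _ _ hb,
      List.getD_eq_getElem _ _ (hab.trans hb), List.getD_eq_getElem _ _ hb] at heq
    exact hab.ne (hs.getElem_inj_iff.mp heq)
  · rw [List.getD_append_right _ _ _ _ hb, List.getD_append_right _ _ _ _ (by omega),
      List.getD_eq_getElem _ _ (by omega), List.getD_eq_getElem _ _ (by omega)] at hlt
    exact (hlt.trans (List.pairwise_iff_getElem.mp ht _ _ _ _ (by omega))).false

lemma not_contains110_append_of_forall_lt {s t : List ℕ} (hs : ¬Contains110 s)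
    (ht : ¬Contains110 t) (hst : ∀ x ∈ s, ∀ y ∈ t, x < y) : ¬Contains110 (s ++ t) := by
  rintro ⟨a, b, c, hab, hbc, hc, heq, hlt⟩
  rw [List.length_append] at hc
  rcases lt_or_ge c s.length with hcs | hcs
  · rw [List.getD_append _ _ _ _ (by omega), List.getD_append _ _ _ _ (by omega)] at heq hlt
    exact hs ⟨a, b, c, hab, hbc, hcs, heq, hlt⟩
  rcases lt_or_ge a s.length with has | has
  · have hmem_s : (s ++ t).getD a 0 ∈ s := by
      rw [List.getD_append _ _ _ _ has, List.getD_eq_getElem _ _ has]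
      exact List.getElem_mem _
    have hmem_t : (s ++ t).getD c 0 ∈ t := by
      rw [List.getD_append_right _ _ _ _ hcs, List.getD_eq_getElem _ _ (by omega)]
      exact List.getElem_mem _
    have := hst _ hmem_s _ hmem_t
    omega
  · rw [List.getD_append_right _ _ _ _ has, List.getD_append_right _ _ _ _ (by omega)] at heq
    rw [List.getD_append_right _ _ _ _ hcs, List.getD_append_right _ _ _ _ (by omega)] at hlt
    exact ht ⟨a - s.length, b - s.length, c - s.length, by omega, by omega, by omega, heq, hlt⟩

lemma isAscentSeq_range_append_range_append_ofFn {n : ℕ} {f : Fin n → ℕ}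
    (hf : ∀ i, f i < 2 * n) : IsAscentSeq (List.range n ++ List.range n ++ List.ofFn f) := by
  rcases Nat.eq_zero_or_pos n with rfl | hn
  · simp [IsAscentSeq]
  have hrange : List.range n ≠ [] := by simpa using hn.ne'
  have hdouble : IsAscentSeq (List.range n ++ List.range n) :=
    (isAscentSeq_range n).append hrange fun x hx => by
      rw [asc_range]
      have := List.mem_range.mp hx
      omega
  refine hdouble.append (by simp [hrange]) fun x hx => ?_
  obtain ⟨i, rfl⟩ := List.mem_ofFn.mp hx
  have hasc := asc_add_asc_le_asc_append (List.range n) (List.range n)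
  rw [asc_range] at hasc
  have := hf i
  omega

lemma not_contains110_range_append_range_append_ofFn {n : ℕ} {f : Fin n → ℕ}
    (hf : ∀ i, n ≤ f i) (hinj : Function.Injective f) :
    ¬Contains110 (List.range n ++ List.range n ++ List.ofFn f) := by
  refine not_contains110_append_of_forall_lt ?_ ?_ fun x hx y hy => ?_
  · exact not_contains110_append_of_nodup_of_pairwise_lt List.nodup_range List.pairwise_lt_range
  · simpa using not_contains110_append_of_nodup_of_pairwise_lt (List.nodup_ofFn.mpr hinj)
      (List.Pairwise.nil (R := (· < ·)))
  · obtain ⟨i, rfl⟩ := List.mem_ofFn.mp hy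
    have := hf i
    simp only [List.mem_append, List.mem_range, or_self] at hx
    omega

theorem stmt8_general (n : ℕ) :
    (∀ σ : Equiv.Perm (Fin n),
      IsAscentSeq (List.range n ++ List.range n ++ List.ofFn (fun i => n + (σ i : ℕ))) ∧
      ¬ Contains110 (List.range n ++ List.range n ++ List.ofFn (fun i => n + (σ i : ℕ)))) ∧
    Nat.factorial n ≤ {s : List ℕ | s.length = 3 * n ∧ IsAscentSeq s ∧ ¬ Contains110 s}.ncard := by
  set S := {s : List ℕ | s.length = 3 * n ∧ IsAscentSeq s ∧ ¬ Contains110 s}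
  set w : Equiv.Perm (Fin n) → List ℕ :=
    fun σ => List.range n ++ List.range n ++ List.ofFn (fun i => n + (σ i : ℕ))
  have hw : ∀ σ, IsAscentSeq (w σ) ∧ ¬Contains110 (w σ) := fun σ =>
    ⟨isAscentSeq_range_append_range_append_ofFn fun i => by have := (σ i).isLt; omega,
      not_contains110_range_append_range_append_ofFn (fun i => by omega)
        fun i j hij => σ.injective (Fin.ext (by simpa using hij))⟩
  have hwS : ∀ σ, w σ ∈ S := fun σ =>
    ⟨by simp only [w, List.length_append, List.length_range, List.length_ofFn]; omega, hw σ⟩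
  have hw_inj : Function.Injective w := fun σ τ h => Equiv.ext fun i =>
    Fin.ext (by simpa using congrFun (List.ofFn_injective (List.append_cancel_left h)) i)
  have : Finite S := (finite_setOf_length_eq_forall_le (3 * n) (3 * n)).subset
    fun s ⟨hlen, hs, _⟩ => ⟨hlen, hlen ▸ hs.le_length⟩
  refine ⟨hw, ?_⟩
  calc n.factorial = Nat.card (Equiv.Perm (Fin n)) := by simp [Fintype.card_perm]
    _ ≤ Nat.card S := Nat.card_le_card_of_injective (fun σ => ⟨w σ, hwS σ⟩)
        fun σ τ h => hw_inj (congrArg Subtype.val h)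
    _ = S.ncard := Nat.card_coe_set_eq S

/-- At least `n!` 110-avoiding ascent sequences of length `3n`, witnessed by
`0,…,n-1, 0,…,n-1` followed by a permutation of `n,…,2n-1`. -/
theorem stmt8 (n : ℕ) (hn : 1 ≤ n) :
    (∀ σ : Equiv.Perm (Fin n),
      IsAscentSeq (List.range n ++ List.range n ++ List.ofFn (fun i => n + (σ i : ℕ))) ∧
      ¬ Contains110 (List.range n ++ List.range n ++ List.ofFn (fun i => n + (σ i : ℕ)))) ∧
    Nat.factorial n ≤ {s : List ℕ | s.length = 3 * n ∧ IsAscentSeq s ∧ ¬ Contains110 s}.ncard :=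
  stmt8_general n
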